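/- Let σ_m(n) ∈ (0,1) denote the unique root in (0,1) of the equation z = α_n(mμ_n − mμ_n z). Then for all sufficiently large n the constant K_m(n) is well defined, and K_m(n) = 1 + O(ε_n) as n → ∞; that is, there is a constant M such that |K_m(n) − 1| ≤ M ε_n for all large n. -/

import Mathlib

/-!
Put `c = mμ`, `u = 1 - σ` and `α(t) = ∫ e^{-tx} dA(x)`. Since `t ↦ 1 - α(ct)` is concave and
vanishes at `0`, the root equation `1 - α(cu) = u` gives `d ≤ 1 - α(cd)` for every `d ∈ (0, u]`.
Bounding `1 - e^{-y}` by its cubic Taylor polynomial turns this into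
`d ϱ₂ / 2 - d² ϱ₃ / 6 ≤ ϱ₁ - 1 = ε / (1 - ε)`, where `ϱ₂ ≥ ϱ₁² ≥ 1` by Jensen and `ϱ₃` is bounded;
taking `d = min u (3 / (2 sup ϱ₃))` forces `u ≤ 8ε`. Jensen also gives `φ_j ≥ e^{-2}`, so once
`m u < 1/2` every summand of `K_m` is bounded uniformly in `n`, and `K_m = (1 + O(u))⁻¹ = 1 + O(ε)`.
-/

open MeasureTheory Filter Topology

/-- `φ_j(n) = ∫ e^{-jμ_n x} dA_n(x)`. -/
noncomputable def phi (μ : ℝ) (A : Measure ℝ) (j : ℕ) : ℝ :=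
  ∫ x, Real.exp (-(j * μ * x)) ∂A

/-- `C_j(n) = ∏_{i=1}^j (1-φ_i(n))/φ_i(n)`. -/
noncomputable def Cprod (μ : ℝ) (A : Measure ℝ) (j : ℕ) : ℝ :=
  ∏ i ∈ Finset.Icc 1 j, (1 - phi μ A i) / phi μ A i

/-- The constant `K_m(n)` of relation (3.5). -/
noncomputable def Km (m : ℕ) (μ : ℝ) (A : Measure ℝ) (σ : ℝ) : ℝ :=
  (1 + (1 - σ) * ∑ j ∈ Finset.Icc 1 m,
      (m.choose j : ℝ) * (Cprod μ A j / (1 - phi μ A j)) *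
        ((m * (1 - phi μ A j) - j) / (m * (1 - σ) - j)))⁻¹

open Real Finset

lemma exp_neg_le_one_sub_add_sq_div_two {t : ℝ} (ht : 0 ≤ t) : exp (-t) ≤ 1 - t + t ^ 2 / 2 := by
  let f (t : ℝ) : ℝ := 1 - t + t ^ 2 / 2 - exp (-t)
  have hderiv (t : ℝ) : deriv f t = -1 + t + exp (-t) := by
    simp (disch := fun_prop) [f]
    ring
  have hmono : MonotoneOn f (Set.Ici 0) := by
    apply monotoneOn_of_deriv_nonneg (convex_Ici 0) (by fun_prop) (by fun_prop)
    intro x _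
    rw [hderiv]
    linarith [add_one_le_exp (-x)]
  simpa [f] using hmono Set.self_mem_Ici ht ht

lemma one_sub_add_sq_sub_cube_le_exp_neg {t : ℝ} (ht : 0 ≤ t) :
    1 - t + t ^ 2 / 2 - t ^ 3 / 6 ≤ exp (-t) := by
  let f (t : ℝ) : ℝ := exp (-t) - (1 - t + t ^ 2 / 2 - t ^ 3 / 6)
  have hderiv (t : ℝ) : deriv f t = 1 - t + t ^ 2 / 2 - exp (-t) := by
    simp (disch := fun_prop) [f]
    ring
  have hmono : MonotoneOn f (Set.Ici 0) := by
    apply monotoneOn_of_deriv_nonneg (convex_Ici 0) (by fun_prop) (by fun_prop)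
    intro x hx
    rw [interior_Ici] at hx
    rw [hderiv]
    linarith [exp_neg_le_one_sub_add_sq_div_two (le_of_lt hx)]
  simpa [f] using hmono Set.self_mem_Ici ht ht

lemma mul_one_sub_exp_neg_le {y d u : ℝ} (hd : 0 < d) (hdu : d ≤ u) :
    d * (1 - exp (-(u * y))) ≤ u * (1 - exp (-(d * y))) := by
  have hu : 0 < u := hd.trans_le hdu
  have h := convexOn_exp.2 (Set.mem_univ (-(u * y))) (Set.mem_univ 0)
    (div_nonneg hd.le hu.le) (sub_nonneg.2 ((div_le_one hu).2 hdu)) (add_sub_cancel _ _)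
  simp only [smul_eq_mul, mul_zero, add_zero, exp_zero, mul_one] at h
  rw [show d / u * -(u * y) = -(d * y) by field_simp] at h
  have := mul_le_mul_of_nonneg_left h hu.le
  rw [mul_add, ← mul_assoc, mul_div_cancel₀ _ hu.ne', mul_sub, mul_one,
    mul_div_cancel₀ _ hu.ne'] at this
  linarith

lemma le_four_mul_of_forall_one_le_cubic {r₁ r₂ r₃ B u : ℝ} (hu : 0 < u) (hB : 0 < B)
    (hr₂ : 1 ≤ r₂) (hr₃B : r₃ ≤ B) (hr₁ : 4 * (r₁ - 1) < 3 / (2 * B))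
    (h : ∀ d, 0 < d → d ≤ u → 1 ≤ r₁ - d / 2 * r₂ + d ^ 2 / 6 * r₃) :
    u ≤ 4 * (r₁ - 1) := by
  set d := min u (3 / (2 * B))
  have hd : 0 < d := lt_min hu (by positivity)
  have hdB : d * B ≤ 3 / 2 :=
    (mul_le_mul_of_nonneg_right (min_le_right _ _) hB.le).trans_eq (by field_simp)
  have hd4 : d ≤ 4 * (r₁ - 1) := by
    nlinarith [h d hd (min_le_left _ _), mul_le_mul_of_nonneg_left hr₃B (mul_nonneg hd.le hd.le)]
  have hus : u < 3 / (2 * B) := by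
    simpa [d, min_lt_iff] using hd4.trans_lt hr₁
  simpa [d, min_eq_left hus.le] using hd4

lemma mul_eq_inv_of_inv_div_eq {c L r : ℝ} (h : L⁻¹ / c = r) : c * L = r⁻¹ := by
  rw [← h, inv_div, div_inv_eq_mul]

lemma forall_mem_Icc_ne_natCast_of_lt_one {x : ℝ} (hx : x < 1) (m : ℕ) :
    ∀ j ∈ Icc 1 m, x ≠ j := fun j hj =>
  (hx.trans_le (by exact_mod_cast (mem_Icc.1 hj).1)).ne

lemma abs_inv_one_add_sub_one_le {x : ℝ} (hx : |x| ≤ 1 / 2) : |(1 + x)⁻¹ - 1| ≤ 2 * |x| := by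
  have h1x : 1 / 2 ≤ 1 + x := by linarith [neg_abs_le x]
  rw [show (1 + x)⁻¹ - 1 = -x / (1 + x) by field_simp; ring, abs_div, abs_neg,
    abs_of_pos (by linarith : 0 < 1 + x), div_le_iff₀ (by linarith)]
  nlinarith [abs_nonneg x]

-- `phi μ A j = laplace A (j * μ)` by `rfl`, and the root equation reads
-- `laplace A (m * μ - m * μ * σ) = σ`.
noncomputable def laplace (a : Measure ℝ) (t : ℝ) : ℝ := ∫ x, exp (-(t * x)) ∂a

section Laplace

variable {a : Measure ℝ} [IsProbabilityMeasure a]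

lemma integrable_exp_neg_mul (h0 : ∀ᵐ x ∂a, 0 ≤ x) {t : ℝ} (ht : 0 ≤ t) :
    Integrable (fun x => exp (-(t * x))) a := by
  refine (integrable_const (1 : ℝ)).mono' (by fun_prop) ?_
  filter_upwards [h0] with x hx
  rw [norm_of_nonneg (exp_pos _).le, exp_le_one_iff, neg_nonpos]
  positivity

lemma laplace_le_one (h0 : ∀ᵐ x ∂a, 0 ≤ x) {t : ℝ} (ht : 0 ≤ t) : laplace a t ≤ 1 := by
  refine (integral_mono_ae (integrable_exp_neg_mul h0 ht) (integrable_const 1) ?_).trans_eq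
    (by simp)
  filter_upwards [h0] with x hx
  rw [exp_le_one_iff, neg_nonpos]
  positivity

lemma exp_neg_mul_integral_le_laplace (h0 : ∀ᵐ x ∂a, 0 ≤ x)
    (hint1 : Integrable (fun x => x) a) {t : ℝ} (ht : 0 ≤ t) :
    exp (-(t * ∫ x, x ∂a)) ≤ laplace a t := by
  have hconv : ConvexOn ℝ Set.univ fun y => exp (-(t * y)) := by
    simpa [Function.comp_def] using convexOn_exp.comp_linearMap (LinearMap.mul ℝ ℝ (-t))
  exact hconv.map_integral_le (by fun_prop) isClosed_univ (by simp) hint1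
    (integrable_exp_neg_mul h0 ht)

lemma sq_integral_le_integral_sq (hint1 : Integrable (fun x => x) a)
    (hint2 : Integrable (fun x => x ^ 2) a) :
    (∫ x, x ∂a) ^ 2 ≤ ∫ x, x ^ 2 ∂a :=
  (Even.convexOn_pow even_two).map_integral_le (by fun_prop) isClosed_univ (by simp) hint1 hint2

lemma one_sub_laplace_le (h0 : ∀ᵐ x ∂a, 0 ≤ x) (hint1 : Integrable (fun x => x) a)
    (hint2 : Integrable (fun x => x ^ 2) a) (hint3 : Integrable (fun x => x ^ 3) a)
    {t : ℝ} (ht : 0 ≤ t) :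
    1 - laplace a t ≤
      t * ∫ x, x ∂a - t ^ 2 / 2 * ∫ x, x ^ 2 ∂a + t ^ 3 / 6 * ∫ x, x ^ 3 ∂a := by
  have hlin : Integrable (fun x => 1 - t * x) a := (integrable_const 1).sub (hint1.const_mul t)
  have hquad : Integrable (fun x => 1 - t * x + t ^ 2 / 2 * x ^ 2) a :=
    hlin.add (hint2.const_mul _)
  have h := integral_mono_ae (f := fun x => 1 - t * x + t ^ 2 / 2 * x ^ 2 - t ^ 3 / 6 * x ^ 3)
    (hquad.sub (hint3.const_mul _))
    (integrable_exp_neg_mul h0 ht) (by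
      filter_upwards [h0] with x hx
      have := one_sub_add_sq_sub_cube_le_exp_neg (mul_nonneg ht hx)
      rwa [mul_pow, mul_pow, ← div_mul_eq_mul_div, ← div_mul_eq_mul_div] at this)
  rw [integral_sub hquad (hint3.const_mul _), integral_add hlin (hint2.const_mul _),
    integral_sub (integrable_const 1) (hint1.const_mul t), integral_const_mul, integral_const_mul,
    integral_const_mul] at h
  simp only [integral_const, probReal_univ, smul_eq_mul, one_mul] at h
  rw [laplace]
  linarith

lemma mul_one_sub_laplace_le (h0 : ∀ᵐ x ∂a, 0 ≤ x) {c d u : ℝ} (hc : 0 ≤ c) (hd : 0 < d)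
    (hdu : d ≤ u) :
    d * (1 - laplace a (c * u)) ≤ u * (1 - laplace a (c * d)) := by
  have hint (t : ℝ) (ht : 0 ≤ t) (w : ℝ) :
      ∫ x, w * (1 - exp (-(t * x))) ∂a = w * (1 - laplace a t) := by
    rw [integral_const_mul, integral_sub (integrable_const 1) (integrable_exp_neg_mul h0 ht)]
    simp [laplace]
  have hcu : 0 ≤ c * u := mul_nonneg hc (hd.le.trans hdu)
  have hcd : 0 ≤ c * d := mul_nonneg hc hd.le
  rw [← hint _ hcu, ← hint _ hcd]
  refine integral_mono_ae (((integrable_const 1).sub (integrable_exp_neg_mul h0 hcu)).const_mul d)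
    (((integrable_const 1).sub (integrable_exp_neg_mul h0 hcd)).const_mul u) ?_
  filter_upwards with x
  have := mul_one_sub_exp_neg_le (y := c * x) hd hdu
  rwa [mul_left_comm u c, mul_left_comm d c, ← mul_assoc, ← mul_assoc] at this

lemma le_one_sub_laplace_of_root (h0 : ∀ᵐ x ∂a, 0 ≤ x) {c d u : ℝ} (hc : 0 ≤ c) (hd : 0 < d)
    (hdu : d ≤ u) (hroot : laplace a (c * u) = 1 - u) :
    d ≤ 1 - laplace a (c * d) := by
  have := mul_one_sub_laplace_le h0 hc hd hdu
  rw [hroot, sub_sub_cancel, mul_comm] at this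
  exact le_of_mul_le_mul_left this (hd.trans_le hdu)

lemma one_sub_root_le (h0 : ∀ᵐ x ∂a, 0 ≤ x) (hint1 : Integrable (fun x => x) a)
    (hint2 : Integrable (fun x => x ^ 2) a) (hint3 : Integrable (fun x => x ^ 3) a)
    {c e B s : ℝ} (hc : 0 < c) (he : 0 ≤ e) (he2 : e ≤ 1 / 2)
    (hr₁ : c * ∫ x, x ∂a = (1 - e)⁻¹) (hB : 0 < B) (h3 : ∫ x, (c * x) ^ 3 ∂a ≤ B)
    (heB : 16 * B * e < 3) (hs : s < 1) (hroot : laplace a (c - c * s) = s) :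
    1 - s ≤ 8 * e := by
  have hr₁e : (1 - e)⁻¹ - 1 ≤ 2 * e := by
    rw [inv_eq_one_div, div_sub_one (by linarith), div_le_iff₀ (by linarith)]
    nlinarith
  have hr₂ : 1 ≤ c ^ 2 * ∫ x, x ^ 2 ∂a := by
    have hr₁1 : 1 ≤ c * ∫ x, x ∂a := by
      rw [hr₁]
      exact one_le_inv₀ (by linarith) |>.2 (by linarith)
    nlinarith [mul_le_mul_of_nonneg_left (sq_integral_le_integral_sq hint1 hint2) (sq_nonneg c)]
  have hr₃ : ∫ x, (c * x) ^ 3 ∂a = c ^ 3 * ∫ x, x ^ 3 ∂a := by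
    simp only [mul_pow, integral_const_mul]
  have hcubic (d : ℝ) (hd : 0 < d) (hdu : d ≤ 1 - s) :
      1 ≤ (1 - e)⁻¹ - d / 2 * (c ^ 2 * ∫ x, x ^ 2 ∂a) + d ^ 2 / 6 * (c ^ 3 * ∫ x, x ^ 3 ∂a) := by
    have h := (le_one_sub_laplace_of_root h0 hc.le hd hdu (by rw [mul_one_sub]; simp [hroot])).trans
      (one_sub_laplace_le h0 hint1 hint2 hint3 (mul_nonneg hc.le hd.le))
    rw [← hr₁]
    refine le_of_mul_le_mul_left ?_ hd
    linear_combination h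
  have hsmall : 4 * ((1 - e)⁻¹ - 1) < 3 / (2 * B) := by
    rw [lt_div_iff₀ (by positivity)]
    nlinarith
  linarith [le_four_mul_of_forall_one_le_cubic (sub_pos.2 hs) hB hr₂ (hr₃ ▸ h3) hsmall hcubic]

lemma phi_mem_Icc (h0 : ∀ᵐ x ∂a, 0 ≤ x) (hint1 : Integrable (fun x => x) a) {ν κ : ℝ}
    {j m : ℕ} (hν : 0 ≤ ν) (hjm : j ≤ m) (hmean : m * ν * ∫ x, x ∂a ≤ κ) :
    (exp κ)⁻¹ ≤ phi ν a j ∧ phi ν a j ≤ 1 := by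
  have hjν : 0 ≤ j * ν := by positivity
  have hj : j * ν * ∫ x, x ∂a ≤ κ := by
    have := integral_nonneg_of_ae h0
    refine le_trans ?_ hmean
    gcongr
  refine ⟨?_, laplace_le_one h0 hjν⟩
  calc (exp κ)⁻¹ = exp (-κ) := (exp_neg κ).symm
    _ ≤ exp (-(j * ν * ∫ x, x ∂a)) := exp_le_exp.2 (neg_le_neg hj)
    _ ≤ phi ν a j := exp_neg_mul_integral_le_laplace h0 hint1 hjν

end Laplace

section Km

variable {μ : ℝ} {A : Measure ℝ} {κ : ℝ}

lemma one_sub_phi_div_phi_mem_Icc {i : ℕ} (hκ : 0 < κ) (hφ : κ⁻¹ ≤ phi μ A i ∧ phi μ A i ≤ 1) :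
    0 ≤ (1 - phi μ A i) / phi μ A i ∧ (1 - phi μ A i) / phi μ A i ≤ κ := by
  have hpos : 0 < phi μ A i := (inv_pos.2 hκ).trans_le hφ.1
  refine ⟨div_nonneg (sub_nonneg.2 hφ.2) hpos.le, ?_⟩
  calc (1 - phi μ A i) / phi μ A i ≤ 1 / phi μ A i := by gcongr; linarith
    _ ≤ κ := by rw [one_div]; exact inv_le_of_inv_le₀ hκ hφ.1

lemma Cprod_div_one_sub_phi_mem_Icc {j : ℕ} (hj : 1 ≤ j) (hκ : 0 < κ)
    (hφ : ∀ i ∈ Icc 1 j, κ⁻¹ ≤ phi μ A i ∧ phi μ A i ≤ 1) :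
    0 ≤ Cprod μ A j / (1 - phi μ A j) ∧ Cprod μ A j / (1 - phi μ A j) ≤ κ ^ j := by
  obtain ⟨k, rfl⟩ : ∃ k, j = k + 1 := ⟨j - 1, by omega⟩
  have hfac (i) (hi : i ∈ Icc 1 (k + 1)) := one_sub_phi_div_phi_mem_Icc hκ (hφ i hi)
  have hprefix : 0 ≤ ∏ i ∈ Icc 1 k, (1 - phi μ A i) / phi μ A i ∧
      ∏ i ∈ Icc 1 k, (1 - phi μ A i) / phi μ A i ≤ κ ^ k := by
    have hsub : Icc 1 k ⊆ Icc 1 (k + 1) := Icc_subset_Icc_right k.le_succ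
    refine ⟨prod_nonneg fun i hi => (hfac i (hsub hi)).1, ?_⟩
    calc ∏ i ∈ Icc 1 k, (1 - phi μ A i) / phi μ A i ≤ ∏ _i ∈ Icc 1 k, κ :=
          prod_le_prod (fun i hi => (hfac i (hsub hi)).1) fun i hi => (hfac i (hsub hi)).2
      _ = κ ^ k := by simp
  have hlast : 0 ≤ (1 - phi μ A (k + 1)) / phi μ A (k + 1) / (1 - phi μ A (k + 1)) ∧
      (1 - phi μ A (k + 1)) / phi μ A (k + 1) / (1 - phi μ A (k + 1)) ≤ κ := by
    have hφk := hφ (k + 1) (right_mem_Icc.2 (by omega))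
    by_cases h1 : 1 - phi μ A (k + 1) = 0
    · simp [h1, hκ.le]
    · rw [div_div_cancel_left' h1]
      exact ⟨inv_nonneg.2 ((inv_pos.2 hκ).le.trans hφk.1), inv_le_of_inv_le₀ hκ hφk.1⟩
  rw [Cprod, prod_Icc_succ_top (by omega), mul_div_assoc, pow_succ]
  exact ⟨mul_nonneg hprefix.1 hlast.1, mul_le_mul hprefix.2 hlast.2 hlast.1 (by positivity)⟩

lemma abs_sum_Km_le {m : ℕ} {σ : ℝ} (hκ : 0 < κ)
    (hφ : ∀ i ∈ Icc 1 m, κ⁻¹ ≤ phi μ A i ∧ phi μ A i ≤ 1) (hσ : m * (1 - σ) < 1 / 2) :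
    |∑ j ∈ Icc 1 m, (m.choose j : ℝ) * (Cprod μ A j / (1 - phi μ A j)) *
        ((m * (1 - phi μ A j) - j) / (m * (1 - σ) - j))| ≤
      ∑ j ∈ Icc 1 m, (m.choose j : ℝ) * κ ^ j * (2 * m) := by
  refine (abs_sum_le_sum_abs _ _).trans (sum_le_sum fun j hj => ?_)
  obtain ⟨hj1, hjm⟩ := mem_Icc.1 hj
  have hj1' : (1 : ℝ) ≤ j := by exact_mod_cast hj1
  have hjm' : (j : ℝ) ≤ m := by exact_mod_cast hjm
  have hC := Cprod_div_one_sub_phi_mem_Icc hj1 hκ fun i hi =>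
    hφ i (Icc_subset_Icc_right hjm hi)
  have hφj := hφ j hj
  have hφ0 : 0 ≤ phi μ A j := (inv_pos.2 hκ).le.trans hφj.1
  have hratio : |(m * (1 - phi μ A j) - j) / (m * (1 - σ) - j)| ≤ 2 * m := by
    have hden : 1 / 2 ≤ |m * (1 - σ) - j| := by
      rw [abs_sub_comm]
      exact le_abs.2 (Or.inl (by linarith))
    have hnum : |m * (1 - phi μ A j) - j| ≤ m :=
      abs_le.2 ⟨by nlinarith [hφj.2], by nlinarith⟩
    rw [abs_div, div_le_iff₀ (by linarith)]
    nlinarith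
  rw [abs_mul, abs_mul, Nat.abs_cast, abs_of_nonneg hC.1]
  gcongr
  exact hC.2

lemma abs_Km_sub_one_le {m : ℕ} {σ : ℝ} (hκ : 0 < κ)
    (hφ : ∀ i ∈ Icc 1 m, κ⁻¹ ≤ phi μ A i ∧ phi μ A i ≤ 1) (hσ₀ : 0 ≤ 1 - σ)
    (hσ : m * (1 - σ) < 1 / 2)
    (hsmall : (1 - σ) * ∑ j ∈ Icc 1 m, (m.choose j : ℝ) * κ ^ j * (2 * m) ≤ 1 / 2) :
    |Km m μ A σ - 1| ≤ 2 * ((1 - σ) * ∑ j ∈ Icc 1 m, (m.choose j : ℝ) * κ ^ j * (2 * m)) := by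
  have h := mul_le_mul_of_nonneg_left (abs_sum_Km_le hκ hφ hσ) hσ₀
  rw [← abs_of_nonneg hσ₀, ← abs_mul, abs_of_nonneg hσ₀] at h
  exact (abs_inv_one_add_sub_one_le (h.trans hsmall)).trans (by gcongr)

end Km

theorem Km_asymptotics_general
    (m : ℕ) (hm : 1 ≤ m)
    (A : ℕ → Measure ℝ) [∀ n, IsProbabilityMeasure (A n)]
    (μ : ℕ → ℝ) (hμ : ∀ n, 0 < μ n)
    (hsupp : ∀ n, A n {x | x < 0} = 0)
    (hint1 : ∀ n, Integrable (fun x => x) (A n))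
    (hint2 : ∀ n, Integrable (fun x => x ^ 2) (A n))
    (hint3 : ∀ n, Integrable (fun x => x ^ 3) (A n))
    (ε : ℕ → ℝ) (hε : ∀ n, 0 < ε n) (hε0 : Tendsto ε atTop (𝓝 0))
    (hϱ : ∀ n, (∫ x, x ∂(A n))⁻¹ / (m * μ n) = 1 - ε n)
    (hϱ3 : ∃ B : ℝ, ∀ n, ∫ x, (m * μ n * x) ^ 3 ∂(A n) ≤ B)
    (σ : ℕ → ℝ) (hσ : ∀ n, σ n ∈ Set.Ioo (0 : ℝ) 1)
    (hroot : ∀ n, ∫ x, Real.exp (-((m * μ n - m * μ n * σ n) * x)) ∂(A n) = σ n) :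
    ∃ M : ℝ, ∃ N : ℕ, ∀ n ≥ N,
      (∀ j ∈ Finset.Icc 1 m, (m : ℝ) * (1 - σ n) ≠ j) ∧
        |Km m (μ n) (A n) (σ n) - 1| ≤ M * ε n := by
  obtain ⟨B, hB⟩ := hϱ3
  have hm₀ : (0 : ℝ) < m := by exact_mod_cast hm
  set S₀ := ∑ j ∈ Icc 1 m, (m.choose j : ℝ) * exp 2 ^ j * (2 * m)
  have hS₀ : 0 ≤ S₀ := by positivity
  have hsmall (C η : ℝ) (hη : 0 < η) : ∀ᶠ n in atTop, C * ε n < η :=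
    (hε0.const_mul C).eventually (gt_mem_nhds (by simpa))
  refine ⟨16 * S₀, eventually_atTop.1 ?_⟩
  filter_upwards [hsmall 2 1 one_pos, hsmall (16 * max B 1) 3 three_pos,
    hsmall (16 * m) 1 one_pos, hsmall (16 * S₀) 1 one_pos] with n he2 heB hem heS
  have h0 : ∀ᵐ x ∂(A n), 0 ≤ x := ae_iff.2 (by simpa [not_le] using hsupp n)
  have hmean := mul_eq_inv_of_inv_div_eq (hϱ n)
  have hgap : 1 - σ n ≤ 8 * ε n :=
    one_sub_root_le h0 (hint1 n) (hint2 n) (hint3 n) (mul_pos hm₀ (hμ n)) (hε n).le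
      (by linarith) hmean (by positivity) ((hB n).trans (le_max_left _ _)) heB
      (hσ n).2 (hroot n)
  have hmean₂ : m * μ n * ∫ x, x ∂(A n) ≤ 2 :=
    hmean.trans_le (inv_le_of_inv_le₀ two_pos (by linarith))
  have hmσ : m * (1 - σ n) < 1 / 2 := by nlinarith
  refine ⟨forall_mem_Icc_ne_natCast_of_lt_one (by linarith) m, ?_⟩
  calc |Km m (μ n) (A n) (σ n) - 1| ≤ 2 * ((1 - σ n) * S₀) :=
        abs_Km_sub_one_le (exp_pos 2)
          (fun j hj => phi_mem_Icc h0 (hint1 n) (hμ n).le (mem_Icc.1 hj).2 hmean₂)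
          (sub_pos.2 (hσ n).2).le hmσ (by nlinarith)
    _ ≤ 16 * S₀ * ε n := by nlinarith [mul_le_mul_of_nonneg_right hgap hS₀]

/-- Relation (7.4): in the heavy-traffic regime, for large `n` the constant `K_m(n)` is well
defined and `K_m(n) = 1 + O(ε_n)`. -/
theorem Km_asymptotics
    (m : ℕ) (hm : 1 ≤ m)
    (A : ℕ → Measure ℝ) [∀ n, IsProbabilityMeasure (A n)]
    (μ : ℕ → ℝ) (hμ : ∀ n, 0 < μ n)
    (hsupp : ∀ n, A n {x | x < 0} = 0)
    (hint1 : ∀ n, Integrable (fun x => x) (A n))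
    (hint2 : ∀ n, Integrable (fun x => x ^ 2) (A n))
    (hint3 : ∀ n, Integrable (fun x => x ^ 3) (A n))
    (ε : ℕ → ℝ) (hε : ∀ n, 0 < ε n) (hε0 : Tendsto ε atTop (𝓝 0))
    (hϱ : ∀ n, (∫ x, x ∂(A n))⁻¹ / (m * μ n) = 1 - ε n)
    (hϱ3 : ∃ B : ℝ, ∀ n, ∫ x, (m * μ n * x) ^ 3 ∂(A n) ≤ B)
    (ρ2 : ℝ) (hϱ2 : Tendsto (fun n => ∫ x, (m * μ n * x) ^ 2 ∂(A n)) atTop (𝓝 ρ2))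
    (σ : ℕ → ℝ) (hσ : ∀ n, σ n ∈ Set.Ioo (0 : ℝ) 1)
    (hroot : ∀ n, ∫ x, Real.exp (-((m * μ n - m * μ n * σ n) * x)) ∂(A n) = σ n) :
    ∃ M : ℝ, ∃ N : ℕ, ∀ n ≥ N,
      (∀ j ∈ Finset.Icc 1 m, (m : ℝ) * (1 - σ n) ≠ j) ∧
        |Km m (μ n) (A n) (σ n) - 1| ≤ M * ε n :=
  Km_asymptotics_general m hm A μ hμ hsupp hint1 hint2 hint3 ε hε hε0 hϱ hϱ3 σ hσ hroot
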